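/- Let X be a Hilbert space and f : X → ℝ a quadratic functional of the form f(x) = ⟨x, Mx⟩ + ⟨b, x⟩ + c with M bounded self-adjoint. If there exist x_e ∈ X and a strictly increasing continuous function α : [0,∞) → [0,∞) with α(0) = 0 such that f(x) − f(x_e) ≥ α(‖x − x_e‖) for all x ∈ X, then ⟨δ, Mδ⟩ ≥ α(1)‖δ‖² for all δ ∈ X. -/
import Mathlib


open InnerProductSpace

/-- If a quadratic functional `f(x) = ⟨x, Mx⟩ + ⟨b, x⟩ + c` satisfies
`f(x) − f(x_e) ≥ α(‖x − x_e‖)` for a class-𝒦 function `α`, then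
`⟨δ, Mδ⟩ ≥ α(1)‖δ‖²` for all `δ`. -/
theorem stmt1
    {X : Type*} [NormedAddCommGroup X] [InnerProductSpace ℝ X] [CompleteSpace X]
    (M : X →L[ℝ] X) (hM : IsSelfAdjoint M) (b : X) (c : ℝ)
    (f : X → ℝ) (hf : ∀ x, f x = ⟪x, M x⟫_ℝ + ⟪b, x⟫_ℝ + c)
    (α : ℝ → ℝ) (hα0 : α 0 = 0)
    (hαmono : StrictMonoOn α (Set.Ici (0 : ℝ)))
    (hαcont : ContinuousOn α (Set.Ici (0 : ℝ)))
    (hαnn : ∀ r ≥ (0 : ℝ), 0 ≤ α r)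
    (x_e : X) (hdiss : ∀ x : X, f x - f x_e ≥ α ‖x - x_e‖) :
    ∀ δ : X, ⟪δ, M δ⟫_ℝ ≥ α 1 * ‖δ‖ ^ 2 := by
  have hsym : ∀ u v : X, ⟪u, M v⟫_ℝ = ⟪v, M u⟫_ℝ := by
    intro u v
    have h := hM.isSymmetric v u
    simp only [ContinuousLinearMap.coe_coe] at h
    rw [real_inner_comm (M v) u]
    exact h
  -- key: f(x_e+u) - f(x_e) = ⟨u,Mu⟩ + L u
  have key : ∀ u : X, ⟪u, M u⟫_ℝ + (2 * ⟪x_e, M u⟫_ℝ + ⟪b, u⟫_ℝ) ≥ α ‖u‖ := by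
    intro u
    have h := hdiss (x_e + u)
    rw [hf, hf] at h
    simp only [add_sub_cancel_left] at h
    have hexp : ⟪x_e + u, M (x_e + u)⟫_ℝ
        = ⟪x_e, M x_e⟫_ℝ + ⟪u, M u⟫_ℝ + 2 * ⟪x_e, M u⟫_ℝ := by
      rw [map_add, inner_add_left, inner_add_right, inner_add_right, hsym u x_e]
      ring
    rw [hexp, inner_add_right] at h
    linarith
  have quad : ∀ u : X, ‖u‖ = 1 → ⟪u, M u⟫_ℝ ≥ α 1 := by
    intro u hu
    have h1 := key u
    have h2 := key (-u)
    rw [norm_neg, hu] at h2; rw [hu] at h1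
    simp only [map_neg, inner_neg_neg, inner_neg_left, inner_neg_right] at h2
    linarith
  intro δ
  by_cases hδ : δ = 0
  · simp [hδ, hα0]
  · have hn : ‖δ‖ ≠ 0 := norm_ne_zero_iff.mpr hδ
    have hq := quad (‖δ‖⁻¹ • δ) (by rw [norm_smul]; simp [abs_of_nonneg (norm_nonneg δ), inv_mul_cancel₀ hn])
    have hsc : ⟪‖δ‖⁻¹ • δ, M (‖δ‖⁻¹ • δ)⟫_ℝ = (‖δ‖⁻¹)^2 * ⟪δ, M δ⟫_ℝ := by
      rw [map_smul, real_inner_smul_left, real_inner_smul_right]; ring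
    rw [hsc] at hq
    have hpos : (0:ℝ) < ‖δ‖^2 := by positivity
    have := mul_le_mul_of_nonneg_left hq (le_of_lt hpos)
    calc α 1 * ‖δ‖ ^ 2 = ‖δ‖^2 * α 1 := by ring
      _ ≤ ‖δ‖^2 * ((‖δ‖⁻¹)^2 * ⟪δ, M δ⟫_ℝ) := this
      _ = ⟪δ, M δ⟫_ℝ := by field_simp
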